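/- arXiv:2511.22660 — 5 statements merged into one kernel-verified Lean document; each statement's English description precedes it below -/
import Mathlib

section
/- Let G be a bipartite TRVG with partite sets represented by p green rectangles g_1, ..., g_p and q red rectangles r_1, ..., r_q. If g_i sees α_i red rectangles horizontally for each i, then q ≥ α_1 + α_2 + ... + α_p − (p − 1). -/
structure Rect where
  x1 : ℝ
  x2 : ℝ
  y1 : ℝ
  y2 : ℝ
  hx : x1 < x2
  hy : y1 < y2

def Rect.pts (R : Rect) : Set (ℝ × ℝ) := Set.Icc R.x1 R.x2 ×ˢ Set.Icc R.y1 R.y2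

def seesV (R S : Rect) : Prop := (Set.Ioo R.x1 R.x2 ∩ Set.Ioo S.x1 S.x2).Nonempty

def seesH (R S : Rect) : Prop := (Set.Ioo R.y1 R.y2 ∩ Set.Ioo S.y1 S.y2).Nonempty

def sees (R S : Rect) : Prop := seesV R S ∨ seesH R S

def IsTRVG {V : Type*} (G : SimpleGraph V) : Prop :=
  ∃ f : V → Rect,
    (∀ u v : V, u ≠ v → Disjoint (f u).pts (f v).pts) ∧
    (∀ u v : V, u ≠ v → (G.Adj u v ↔ sees (f u) (f v)))

/-!
Only the y-projections matter: rectangles of one colour do not see each other, so the open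
y-intervals of the green rectangles are pairwise disjoint, and so are those of the red ones.
Charge each horizontally seeing pair (gᵢ, rⱼ) to rⱼ if gᵢ is the lowest green interval meeting
rⱼ, and to gᵢ otherwise. An interval meeting two disjoint intervals contains the lower end of the
upper one; as the red intervals are disjoint, each green is charged at most once, and the lowest
green never is. So there are at most q + (p - 1) such pairs.
-/

open Set Finset Function

section IntervalOverlaps

variable {α : Type*} [LinearOrder α] [DenselyOrdered α]

lemma le_left_of_disjoint_Ioo {a b a' b' : α} (h : Disjoint (Ioo a b) (Ioo a' b'))
    (ha : a ≤ a') (h' : a' < b') : b ≤ a' := by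
  have hmin := Set.Ioo_disjoint_Ioo.1 h
  rw [max_eq_right ha] at hmin
  exact (min_le_iff.1 hmin).resolve_right h'.not_ge

lemma left_mem_Ioo_of_disjoint_of_inter_nonempty {a b a' b' c d : α}
    (h : Disjoint (Ioo a b) (Ioo a' b')) (ha : a ≤ a')
    (hI : (Ioo a b ∩ Ioo c d).Nonempty) (hI' : (Ioo a' b' ∩ Ioo c d).Nonempty) :
    a' ∈ Ioo c d := by
  obtain ⟨x, ⟨hax, hxb⟩, hcx, -⟩ := hI
  obtain ⟨y, ⟨hay, hyb⟩, -, hyd⟩ := hI'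
  have hba := le_left_of_disjoint_Ioo h ha (hay.trans hyb)
  exact ⟨hcx.trans (hxb.trans_le hba), hay.trans hyd⟩

variable {ι κ : Type*} (a b : ι → α) (c d : κ → α)

def IooOverlaps (i : ι) (j : κ) : Prop := (Ioo (a i) (b i) ∩ Ioo (c j) (d j)).Nonempty

variable {a b c d}

lemma injOn_snd_of_lowest (hab : Pairwise (Disjoint on fun i => Ioo (a i) (b i))) :
    Set.InjOn Prod.snd {x : ι × κ | IooOverlaps a b c d x.1 x.2 ∧
      ∀ k, IooOverlaps a b c d k x.2 → a x.1 ≤ a k} := by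
  rintro ⟨i, j⟩ ⟨hij, hi⟩ ⟨i', j'⟩ ⟨hij', hi'⟩ (rfl : j = j')
  by_contra hne
  have hne : i ≠ i' := fun h => hne (by rw [h])
  have ha : a i = a i' := le_antisymm (hi i' hij') (hi' i hij)
  obtain ⟨x, ⟨hax, hxb⟩, -⟩ := hij
  obtain ⟨y, ⟨hay, hyb⟩, -⟩ := hij'
  have := le_left_of_disjoint_Ioo (hab hne) ha.le (hay.trans hyb)
  exact (hax.trans hxb).not_ge (this.trans ha.ge)

lemma injOn_fst_of_not_lowest (hab : Pairwise (Disjoint on fun i => Ioo (a i) (b i)))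
    (hcd : Pairwise (Disjoint on fun j => Ioo (c j) (d j))) :
    Set.InjOn Prod.fst {x : ι × κ | IooOverlaps a b c d x.1 x.2 ∧
      ¬ ∀ k, IooOverlaps a b c d k x.2 → a x.1 ≤ a k} := by
  have hmem : ∀ i j, IooOverlaps a b c d i j → (¬ ∀ k, IooOverlaps a b c d k j → a i ≤ a k) →
      a i ∈ Ioo (c j) (d j) := by
    intro i j hij hi
    push Not at hi
    obtain ⟨k, hkj, hki⟩ := hi
    exact left_mem_Ioo_of_disjoint_of_inter_nonempty (hab (ne_of_apply_ne a hki.ne)) hki.le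
      hkj hij
  rintro ⟨i, j⟩ ⟨hij, hi⟩ ⟨i', j'⟩ ⟨hij', hi'⟩ (rfl : i = i')
  by_contra hne
  have hne : j ≠ j' := fun h => hne (by rw [h])
  exact Set.disjoint_left.1 (hcd hne) (hmem i j hij hi) (hmem i j' hij' hi')

theorem sum_ncard_IooOverlaps_add_one_le [Fintype ι] [Fintype κ] [Nonempty ι]
    (hab : Pairwise (Disjoint on fun i => Ioo (a i) (b i)))
    (hcd : Pairwise (Disjoint on fun j => Ioo (c j) (d j))) :
    ∑ i, {j | IooOverlaps a b c d i j}.ncard + 1 ≤ Fintype.card ι + Fintype.card κ := by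
  classical
  set E := (univ : Finset (ι × κ)).filter fun x => IooOverlaps a b c d x.1 x.2
  set lowest : ι × κ → Prop := fun x => ∀ k, IooOverlaps a b c d k x.2 → a x.1 ≤ a k
  obtain ⟨m, -, hm⟩ := exists_min_image univ a univ_nonempty
  have hsum : ∑ i, {j | IooOverlaps a b c d i j}.ncard = #E := by
    simp only [E, ncard_eq_toFinset_card', Set.toFinset_ofPred, card_filter, Fintype.sum_prod_type]
  have hlowest : #(E.filter lowest) ≤ Fintype.card κ :=
    card_le_card_of_injOn Prod.snd (fun _ _ => mem_coe.2 (mem_univ _))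
      ((injOn_snd_of_lowest hab).mono fun x hx => by simpa [E, lowest] using hx)
  have hother : #(E.filter (¬ lowest ·)) ≤ #(univ.erase m) := by
    refine card_le_card_of_injOn Prod.fst (fun x hx => ?_)
      ((injOn_fst_of_not_lowest hab hcd).mono fun x hx => by simpa [E, lowest] using hx)
    refine mem_coe.2 (mem_erase.2 ⟨fun hxm => ?_, mem_univ _⟩)
    exact (mem_filter.1 hx).2 fun k _ => hxm ▸ hm k (mem_univ k)
  rw [hsum, ← card_filter_add_card_filter_not (p := lowest)]
  rw [card_erase_of_mem (mem_univ m), card_univ] at hother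
  have := Fintype.card_pos (α := ι)
  omega

end IntervalOverlaps

lemma disjoint_Ioo_y_of_not_sees {R S : Rect} (h : ¬ sees R S) :
    Disjoint (Ioo R.y1 R.y2) (Ioo S.y1 S.y2) :=
  Set.disjoint_iff_inter_eq_empty.2 (Set.not_nonempty_iff_eq_empty.1 fun hH => h (Or.inr hH))

theorem stmt4_general (p q : ℕ) (hp : 0 < p) (g : Fin p → Rect) (r : Fin q → Rect)
    (hgg : ∀ i j : Fin p, i ≠ j → Disjoint (g i).pts (g j).pts ∧ ¬ sees (g i) (g j))
    (hrr : ∀ i j : Fin q, i ≠ j → Disjoint (r i).pts (r j).pts ∧ ¬ sees (r i) (r j)) :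
    (q : ℤ) ≥ (∑ i : Fin p, ({j : Fin q | seesH (g i) (r j)}.ncard : ℤ)) - (p - 1) := by
  have : Nonempty (Fin p) := Fin.pos_iff_nonempty.1 hp
  have hcount : ∑ i, {j | seesH (g i) (r j)}.ncard + 1 ≤ p + q := by
    have := sum_ncard_IooOverlaps_add_one_le (a := fun i => (g i).y1) (b := fun i => (g i).y2)
      (c := fun j => (r j).y1) (d := fun j => (r j).y2)
      (fun i j hij => disjoint_Ioo_y_of_not_sees (hgg i j hij).2)
      (fun i j hij => disjoint_Ioo_y_of_not_sees (hrr i j hij).2)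
    rwa [Fintype.card_fin, Fintype.card_fin] at this
  zify at hcount
  omega

/-- In a bipartite TRVG representation with p green and q red rectangles, if g_i sees α_i
red rectangles horizontally, then q ≥ α_1 + ⋯ + α_p − (p−1). -/
theorem stmt4 (p q : ℕ) (hp : 0 < p) (g : Fin p → Rect) (r : Fin q → Rect)
    (hgg : ∀ i j : Fin p, i ≠ j → Disjoint (g i).pts (g j).pts ∧ ¬ sees (g i) (g j))
    (hrr : ∀ i j : Fin q, i ≠ j → Disjoint (r i).pts (r j).pts ∧ ¬ sees (r i) (r j))
    (hgr : ∀ (i : Fin p) (j : Fin q), Disjoint (g i).pts (r j).pts) :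
    (q : ℤ) ≥ (∑ i : Fin p, ({j : Fin q | seesH (g i) (r j)}.ncard : ℤ)) - (p - 1) :=
  stmt4_general p q hp g r hgg hrr
end

section
/- Every k-partite graph with n vertices that is a TRVG has at most 2(k−1)n − k(k−1) edges. -/
/-!
A TRVG is the union of the interval graphs of the x-projections and of the y-projections, and
the parts colour both properly. Ordering an interval graph by left endpoints, the earlier
neighbours of a vertex all contain a point just right of its left endpoint, so together with it
they form a clique. The `i`-th vertex therefore has at most `min (k - 1) i` earlier neighbours,
and a `k`-colourable interval graph has at most `∑_{i<n} min (k - 1) i = (k - 1) n - k (k - 1) / 2`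
edges.
-/

open Finset

lemma two_mul_sum_range_min_add {k n : ℕ} (hkn : k ≤ n) :
    2 * ∑ i ∈ range n, min (k - 1) i + k * (k - 1) = 2 * (k - 1) * n := by
  induction n, hkn using Nat.le_induction with
  | base =>
    have hmin : ∑ i ∈ range k, min (k - 1) i = ∑ i ∈ range k, i :=
      sum_congr rfl fun i hi => min_eq_right (by have := mem_range.1 hi; omega)
    rw [hmin, mul_comm 2, sum_range_id_mul_two]
    ring
  | succ n hkn ih =>
    rw [sum_range_succ, min_eq_left (by omega), mul_add, add_right_comm, ih]
    ring

lemma Fintype.exists_equivFin_monotone {V β : Type*} [Fintype V] [LinearOrder β] (a : V → β) :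
    ∃ e : V ≃ Fin (Fintype.card V), ∀ u v, e u < e v → a u ≤ a v := by
  let σ := Tuple.sort (a ∘ (Fintype.equivFin V).symm)
  refine ⟨(Fintype.equivFin V).trans σ.symm, fun u v huv => ?_⟩
  simpa [σ] using Tuple.monotone_sort (a ∘ (Fintype.equivFin V).symm) huv.le

namespace SimpleGraph

variable {V : Type*} [Fintype V] (H : SimpleGraph V) [DecidableRel H.Adj]

lemma card_edgeFinset_eq_sum_card_lowerNeighbors {β : Type*} [LinearOrder β] {r : V → β}
    (hr : Function.Injective r) :
    #H.edgeFinset = ∑ v, #{u | H.Adj u v ∧ r u < r v} := by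
  rw [← card_sigma]
  refine (card_bij (fun p _ => s(p.2, p.1)) ?_ ?_ ?_).symm
  · rintro ⟨v, u⟩ huv
    simp only [mem_sigma, mem_filter, mem_univ, true_and] at huv
    simpa using huv.1
  · rintro ⟨v, u⟩ huv ⟨v', u'⟩ huv' heq
    simp only [mem_sigma, mem_filter, mem_univ, true_and] at huv huv'
    rcases Sym2.eq_iff.1 heq with ⟨rfl, rfl⟩ | ⟨rfl, rfl⟩
    · rfl
    · exact absurd huv.2 huv'.2.asymm
  · intro e he
    induction e with
    | _ u v =>
      have hadj : H.Adj u v := by simpa using he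
      rcases lt_or_gt_of_ne (hr.ne hadj.ne) with hlt | hlt
      · exact ⟨⟨v, u⟩, by simp [hadj, hlt], rfl⟩
      · exact ⟨⟨u, v⟩, by simp [hadj.symm, hlt], Sym2.eq_swap⟩

variable {H}

lemma card_lowerNeighbors_le {k n : ℕ} (hH : H.Colorable k) (e : V ≃ Fin n) (v : V)
    (hclique : H.IsClique {u | H.Adj u v ∧ e u < e v}) :
    #{u | H.Adj u v ∧ e u < e v} ≤ min (k - 1) (e v) := by
  classical
  set L : Finset V := {u | H.Adj u v ∧ e u < e v}
  have hvL : v ∉ L := by simp [L]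
  have hcliqueL : H.IsClique (insert v L : Finset V) := by
    rw [coe_insert, isClique_insert]
    exact ⟨by simpa [L] using hclique, fun u hu _ => by simpa [L] using (mem_filter.1 hu).2.1.symm⟩
  have hk : #L + 1 ≤ k := card_insert_of_notMem hvL ▸ hcliqueL.card_le_of_colorable hH
  have hrank : #L ≤ #(Iio (e v)) :=
    card_le_card_of_injOn e (fun u hu => by simpa [L] using (mem_filter.1 hu).2.2) e.injective.injOn
  rw [Fin.card_Iio] at hrank
  omega

/-- `e` is a perfect elimination ordering of `H`. -/
lemma two_mul_card_edgeFinset_add_le_of_isClique {k : ℕ} (hH : H.Colorable k)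
    (hk : k ≤ Fintype.card V) (e : V ≃ Fin (Fintype.card V))
    (hclique : ∀ v, H.IsClique {u | H.Adj u v ∧ e u < e v}) :
    2 * #H.edgeFinset + k * (k - 1) ≤ 2 * (k - 1) * Fintype.card V := by
  have hsum : ∑ v, min (k - 1) (e v : ℕ) = ∑ i ∈ range (Fintype.card V), min (k - 1) i := by
    rw [e.sum_comp (fun i => min (k - 1) (i : ℕ)), Fin.sum_univ_eq_sum_range]
  have hle : #H.edgeFinset ≤ ∑ i ∈ range (Fintype.card V), min (k - 1) i := by
    rw [H.card_edgeFinset_eq_sum_card_lowerNeighbors e.injective, ← hsum]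
    exact sum_le_sum fun v _ => card_lowerNeighbors_le hH e v (hclique v)
  have := two_mul_sum_range_min_add hk
  omega

end SimpleGraph

def intervalGraph {V α : Type*} [Preorder α] (a b : V → α) : SimpleGraph V where
  Adj u v := u ≠ v ∧ (Set.Ioo (a u) (b u) ∩ Set.Ioo (a v) (b v)).Nonempty
  symm := ⟨fun _ _ h => ⟨h.1.symm, Set.inter_comm _ _ ▸ h.2⟩⟩
  loopless := ⟨fun _ h => h.1 rfl⟩

namespace intervalGraph

variable {V α : Type*} [LinearOrder α] [DenselyOrdered α] {a b : V → α}

lemma isClique_lowerNeighbors {n : ℕ} (e : V ≃ Fin n) (he : ∀ u v, e u < e v → a u ≤ a v)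
    (v : V) : (intervalGraph a b).IsClique {u | (intervalGraph a b).Adj u v ∧ e u < e v} := by
  rintro u ⟨⟨-, t, htu, htv⟩, hu⟩ w ⟨⟨-, s, hsw, hsv⟩, hw⟩ huw
  obtain ⟨p, hvp, hp⟩ := exists_between (lt_min (htv.1.trans htu.2) (hsv.1.trans hsw.2))
  exact ⟨huw, p, ⟨(he u v hu).trans_lt hvp, hp.trans_le (min_le_left _ _)⟩,
    ⟨(he w v hw).trans_lt hvp, hp.trans_le (min_le_right _ _)⟩⟩

lemma two_mul_ncard_edgeSet_add_le [Fintype V] {k : ℕ} (hcol : (intervalGraph a b).Colorable k)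
    (hk : k ≤ Fintype.card V) :
    2 * (intervalGraph a b).edgeSet.ncard + k * (k - 1) ≤ 2 * (k - 1) * Fintype.card V := by
  classical
  obtain ⟨e, he⟩ := Fintype.exists_equivFin_monotone a
  rw [← SimpleGraph.coe_edgeFinset, Set.ncard_coe_finset]
  exact SimpleGraph.two_mul_card_edgeFinset_add_le_of_isClique hcol hk e
    (isClique_lowerNeighbors e he)

end intervalGraph

lemma eq_sup_intervalGraph_of_adj_iff_sees {V : Type*} {G : SimpleGraph V} {f : V → Rect}
    (hf : ∀ u v : V, u ≠ v → (G.Adj u v ↔ sees (f u) (f v))) :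
    G = intervalGraph (fun v => (f v).x1) (fun v => (f v).x2) ⊔
      intervalGraph (fun v => (f v).y1) (fun v => (f v).y2) := by
  ext u v
  by_cases huv : u = v
  · subst huv
    simp
  · simp only [SimpleGraph.sup_adj, intervalGraph, hf u v huv, sees, seesV, seesH]
    tauto

/-- Every k-partite TRVG with n vertices has at most 2(k−1)n − k(k−1) edges. -/
theorem stmt5 {V : Type*} [Fintype V] (G : SimpleGraph V) (k n : ℕ)
    (hn : Fintype.card V = n)
    (part : V → Fin k) (hpart : ∀ u v : V, G.Adj u v → part u ≠ part v)
    (hsurj : Function.Surjective part)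
    (h : IsTRVG G) :
    G.edgeSet.ncard ≤ 2 * (k - 1) * n - k * (k - 1) := by
  subst hn
  obtain ⟨f, -, hf⟩ := h
  have hG := eq_sup_intervalGraph_of_adj_iff_sees hf
  have hcol : G.Colorable k := ⟨.mk part fun h => hpart _ _ h⟩
  have hk : k ≤ Fintype.card V := by simpa using Fintype.card_le_of_surjective part hsurj
  have hV := intervalGraph.two_mul_ncard_edgeSet_add_le (hcol.mono_left (hG ▸ le_sup_left)) hk
  have hH := intervalGraph.two_mul_ncard_edgeSet_add_le (hcol.mono_left (hG ▸ le_sup_right)) hk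
  have hunion := Set.ncard_union_le (intervalGraph (fun v => (f v).x1) (fun v => (f v).x2)).edgeSet
    (intervalGraph (fun v => (f v).y1) (fun v => (f v).y2)).edgeSet
  rw [← SimpleGraph.edgeSet_sup, ← hG] at hunion
  omega
end

section
/- Every bipartite TRVG with n vertices has at most 2n − 2 edges. -/
namespace SimpleGraph

variable {V : Type*}

theorem inf_lt_sup_and_adj_of_mem_edgeSet [LinearOrder V] {G : SimpleGraph V} {e : Sym2 V}
    (he : e ∈ G.edgeSet) : e.inf < e.sup ∧ G.Adj e.inf e.sup := by
  induction e using Sym2.ind with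
  | _ u v =>
    rw [mem_edgeSet] at he
    rcases he.ne.lt_or_gt with h | h
    · simp [h.le, h, he]
    · simp [h.le, h, he.symm]

theorem ncard_edgeSet_le_card_sub_one_of_unique_upper_adj [Fintype V] [LinearOrder V]
    (G : SimpleGraph V)
    (h : ∀ u v w : V, u < v → u < w → G.Adj u v → G.Adj u w → v = w) :
    G.edgeSet.ncard ≤ Fintype.card V - 1 := by
  rcases isEmpty_or_nonempty V with hV | hV
  · simp [Set.eq_empty_of_isEmpty G.edgeSet]
  let m := (Finset.univ : Finset V).max' Finset.univ_nonempty
  have hmaps : ∀ e ∈ G.edgeSet, e.inf ∈ ({m}ᶜ : Set V) := fun e he hm =>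
    ((inf_lt_sup_and_adj_of_mem_edgeSet he).1.trans_le
      (Finset.univ.le_max' _ (Finset.mem_univ _))).ne hm
  have hinj : Set.InjOn Sym2.inf G.edgeSet := by
    intro e he e' he' hinf
    obtain ⟨hlt, hadj⟩ := inf_lt_sup_and_adj_of_mem_edgeSet he
    obtain ⟨hlt', hadj'⟩ := inf_lt_sup_and_adj_of_mem_edgeSet he'
    rw [← hinf] at hlt' hadj'
    exact Sym2.inf_eq_inf_and_sup_eq_sup.1 ⟨hinf, h _ _ _ hlt hlt' hadj hadj'⟩
  calc G.edgeSet.ncard ≤ ({m}ᶜ : Set V).ncard := Set.ncard_le_ncard_of_injOn _ hmaps hinj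
    _ = Fintype.card V - 1 := by
      rw [Set.ncard_compl, Set.ncard_singleton, Nat.card_eq_fintype_card]

def intervalOverlapGraph (l r : V → ℝ) : SimpleGraph V where
  Adj u v := u ≠ v ∧ (Set.Ioo (l u) (r u) ∩ Set.Ioo (l v) (r v)).Nonempty
  symm := ⟨fun _ _ h => ⟨h.1.symm, Set.inter_comm .. ▸ h.2⟩⟩
  loopless := ⟨fun _ h => h.1 rfl⟩

@[simp]
theorem intervalOverlapGraph_adj {l r : V → ℝ} {u v : V} :
    (intervalOverlapGraph l r).Adj u v ↔
      u ≠ v ∧ (Set.Ioo (l u) (r u) ∩ Set.Ioo (l v) (r v)).Nonempty :=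
  Iff.rfl

namespace intervalOverlapGraph

variable {l r : V → ℝ}

theorem adj_of_adj_of_adj {u v w : V} (hv : r u ≤ r v) (hw : r u ≤ r w)
    (huv : (intervalOverlapGraph l r).Adj u v) (huw : (intervalOverlapGraph l r).Adj u w)
    (hvw : v ≠ w) : (intervalOverlapGraph l r).Adj v w := by
  obtain ⟨-, s, ⟨-, hsu⟩, hvs, -⟩ := intervalOverlapGraph_adj.1 huv
  obtain ⟨-, t, ⟨-, htu⟩, hwt, -⟩ := intervalOverlapGraph_adj.1 huw
  refine ⟨hvw, max s t, ⟨?_, ?_⟩, ?_, ?_⟩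
  · exact hvs.trans_le (le_max_left s t)
  · exact (max_lt hsu htu).trans_le hv
  · exact hwt.trans_le (le_max_right s t)
  · exact (max_lt hsu htu).trans_le hw

theorem ncard_edgeSet_le [Fintype V] (hG : (intervalOverlapGraph l r).CliqueFree 3) :
    (intervalOverlapGraph l r).edgeSet.ncard ≤ Fintype.card V - 1 := by
  classical
  let key : V → ℝ ×ₗ Fin (Fintype.card V) := fun v => toLex (r v, Fintype.equivFin V v)
  have hkey : Function.Injective key := fun u v huv =>
    (Fintype.equivFin V).injective (congrArg Prod.snd (toLex.injective huv))
  let : LinearOrder V := LinearOrder.lift' key hkey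
  have hr : ∀ u v : V, u < v → r u ≤ r v := fun u v huv => Prod.Lex.monotone_fst_ofLex huv.le
  refine ncard_edgeSet_le_card_sub_one_of_unique_upper_adj _ fun u v w huv huw hv hw => ?_
  by_contra hvw
  exact hG {u, v, w}
    (is3Clique_triple_iff.2 ⟨hv, hw, adj_of_adj_of_adj (hr u v huv) (hr u w huw) hv hw hvw⟩)

end intervalOverlapGraph

theorem eq_intervalOverlapGraph_sup_of_sees {G : SimpleGraph V} {f : V → Rect}
    (hsees : ∀ u v : V, u ≠ v → (G.Adj u v ↔ sees (f u) (f v))) :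
    G = intervalOverlapGraph (fun v => (f v).x1) (fun v => (f v).x2) ⊔
      intervalOverlapGraph (fun v => (f v).y1) (fun v => (f v).y2) := by
  ext u v
  by_cases huv : u = v
  · simp [huv]
  · simpa [huv, sees, seesV, seesH] using hsees u v huv

end SimpleGraph

/-- Every bipartite TRVG with n vertices has at most 2n − 2 edges. -/
theorem stmt6 {V : Type*} [Fintype V] (G : SimpleGraph V) (n : ℕ)
    (hn : Fintype.card V = n)
    (part : V → Fin 2) (hpart : ∀ u v : V, G.Adj u v → part u ≠ part v)
    (h : IsTRVG G) :
    G.edgeSet.ncard ≤ 2 * n - 2 := by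
  obtain ⟨f, -, hsees⟩ := h
  have hG := SimpleGraph.eq_intervalOverlapGraph_sup_of_sees hsees
  have hcol : G.Colorable 2 := ⟨.mk part fun huv => hpart _ _ huv⟩
  have hx := SimpleGraph.intervalOverlapGraph.ncard_edgeSet_le
    ((hcol.mono_left (hG ▸ le_sup_left)).cliqueFree (by norm_num))
  have hy := SimpleGraph.intervalOverlapGraph.ncard_edgeSet_le
    ((hcol.mono_left (hG ▸ le_sup_right)).cliqueFree (by norm_num))
  calc G.edgeSet.ncard ≤ _ + _ := hG ▸ SimpleGraph.edgeSet_sup _ _ ▸ Set.ncard_union_le _ _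
    _ ≤ 2 * n - 2 := by omega
end

section
/- The complete tripartite graph K_{3,3,3} is not a transparent rectangle visibility graph. -/
/-! ### finite combinatorial core -/

abbrev chain1 (s : Fin 3 → Fin 3 → Bool) : Prop :=
  ∀ i i' j j' : Fin 3, i < i' → j' < j → ¬(s i j = true ∧ s i' j' = true)

abbrev chain2 (pa pb : Fin 3 → Fin 3) (s : Fin 3 → Fin 3 → Bool) : Prop :=
  ∀ i i' j j' : Fin 3, pa i < pa i' → pb j' < pb j → ¬(s i j = false ∧ s i' j' = false)

def isId (p : Fin 3 → Fin 3) : Bool := p 0 == 0 && p 1 == 1 && p 2 == 2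
def isRev (p : Fin 3 → Fin 3) : Bool := p 0 == 2 && p 1 == 1 && p 2 == 0
def hiP (p : Fin 3 → Fin 3) : Bool := !(p 0 == 0) && !(p 2 == 2)
def RB (pa pb : Fin 3 → Fin 3) : Bool :=
  (isId pa && hiP pb) || (isId pb && hiP pa) || (isRev pa && !hiP pb) || (isRev pb && !hiP pa)

set_option maxRecDepth 100000 in
set_option maxHeartbeats 4000000 in
lemma L1 : ∀ pa pb : Fin 3 → Fin 3, Function.Injective pa → Function.Injective pb →
    ∀ s : Fin 3 → Fin 3 → Bool, chain1 s → chain2 pa pb s → RB pa pb = true := by decide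

set_option maxRecDepth 100000 in
set_option maxHeartbeats 4000000 in
lemma TRI : ∀ pa pb pc : Fin 3 → Fin 3,
    ¬(RB pa pb = true ∧ RB pa pc = true ∧ RB pb pc = true) := by decide

/-! ### real-interval lemmas -/

lemma ioo_stair {a1 a2 b1 b2 c1 c2 d1 d2 : ℝ}
    (h1 : (Set.Ioo a1 a2 ∩ Set.Ioo b1 b2).Nonempty)
    (h2 : (Set.Ioo c1 c2 ∩ Set.Ioo d1 d2).Nonempty)
    (hac : a2 ≤ c1) (hdb : d2 ≤ b1) : False := by
  obtain ⟨t, ht1, ht2⟩ := h1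
  obtain ⟨u, hu1, hu2⟩ := h2
  simp only [Set.mem_Ioo] at ht1 ht2 hu1 hu2
  linarith [ht1.2, ht2.1, hu1.1, hu2.2]

lemma not_ioo {a1 a2 b1 b2 : ℝ} (ha : a1 < a2) (hb : b1 < b2)
    (h : ¬ (Set.Ioo a1 a2 ∩ Set.Ioo b1 b2).Nonempty) : a2 ≤ b1 ∨ b2 ≤ a1 := by
  by_contra hc
  push_neg at hc
  obtain ⟨h1, h2⟩ := hc
  have hmm : max a1 b1 < min a2 b2 := max_lt (lt_min ha h2) (lt_min h1 hb)
  apply h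
  refine ⟨(max a1 b1 + min a2 b2)/2, ?_, ?_⟩ <;> simp only [Set.mem_Ioo] <;> constructor
  · linarith [le_max_left a1 b1]
  · linarith [min_le_left a2 b2]
  · linarith [le_max_right a1 b1]
  · linarith [min_le_right a2 b2]

lemma not_both {R S : Rect} (hd : Disjoint R.pts S.pts) (hv : seesV R S) (hh : seesH R S) :
    False := by
  obtain ⟨x, hx1, hx2⟩ := hv
  obtain ⟨y, hy1, hy2⟩ := hh
  simp only [Set.mem_Ioo] at hx1 hx2 hy1 hy2
  have m1 : (x, y) ∈ R.pts :=
    ⟨⟨le_of_lt hx1.1, le_of_lt hx1.2⟩, ⟨le_of_lt hy1.1, le_of_lt hy1.2⟩⟩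
  have m2 : (x, y) ∈ S.pts :=
    ⟨⟨le_of_lt hx2.1, le_of_lt hx2.2⟩, ⟨le_of_lt hy2.1, le_of_lt hy2.2⟩⟩
  exact Set.disjoint_left.mp hd m1 m2

/-! ### sorting three elements -/

lemma mk3 {r : Fin 3 → Fin 3 → Prop} (a b c : Fin 3)
    (hbij : Function.Bijective (fun i : Fin 3 => if i.val = 0 then a else if i.val = 1 then b else c))
    (h1 : r a b) (h2 : r b c) (h3 : r a c) :
    ∃ g : Fin 3 → Fin 3, Function.Bijective g ∧ ∀ i j, i < j → r (g i) (g j) := by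
  refine ⟨_, hbij, ?_⟩
  intro i j hij
  fin_cases i <;> fin_cases j <;>
    first
      | exact absurd hij (by decide)
      | simpa using h1
      | simpa using h2
      | simpa using h3

lemma sort3 {r : Fin 3 → Fin 3 → Prop}
    (tot : ∀ i j, i ≠ j → r i j ∨ r j i)
    (asym : ∀ i j, r i j → ¬ r j i)
    (tr : ∀ i j k, r i j → r j k → r i k) :
    ∃ g : Fin 3 → Fin 3, Function.Bijective g ∧ ∀ i j, i < j → r (g i) (g j) := by
  rcases tot 0 1 (by decide) with h01 | h10 <;>
    rcases tot 0 2 (by decide) with h02 | h20 <;>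
    rcases tot 1 2 (by decide) with h12 | h21
  · exact mk3 0 1 2 (by decide) h01 h12 h02
  · exact mk3 0 2 1 (by decide) h02 h21 h01
  · exact absurd (tr _ _ _ h01 h12) (asym _ _ h20)
  · exact mk3 2 0 1 (by decide) h20 h01 (tr _ _ _ h20 h01)
  · exact mk3 1 0 2 (by decide) h10 h02 h12
  · exact absurd (tr _ _ _ h10 h02) (asym _ _ h21)
  · exact mk3 1 2 0 (by decide) h12 h20 h10
  · exact mk3 2 1 0 (by decide) h21 h10 h20

/-- K_{3,3,3} is not a TRVG. -/
theorem stmt7 : ¬ IsTRVG (SimpleGraph.completeMultipartiteGraph (fun _ : Fin 3 => Fin 3)) := by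
  rintro ⟨f, hdisj, hadj⟩
  classical
  have hne : ∀ (p i j : Fin 3), i ≠ j →
      (⟨p, i⟩ : (k : Fin 3) × Fin 3) ≠ ⟨p, j⟩ := by
    intro p i j hij h
    exact hij (by simpa using h)
  have hnosee : ∀ (p i j : Fin 3), i ≠ j →
      ¬ sees (f ⟨p, i⟩) (f ⟨p, j⟩) := by
    intro p i j hij hs
    have h2 := (hadj _ _ (hne p i j hij)).mpr hs
    simp [SimpleGraph.completeMultipartiteGraph] at h2
  have hcross : ∀ (p q i j : Fin 3), p ≠ q → sees (f ⟨p, i⟩) (f ⟨q, j⟩) := by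
    intro p q i j hpq
    have hneq : (⟨p, i⟩ : (k : Fin 3) × Fin 3) ≠ ⟨q, j⟩ := by
      intro h; exact hpq (congrArg Sigma.fst h)
    exact (hadj _ _ hneq).mp (by simpa [SimpleGraph.completeMultipartiteGraph] using hpq)
  -- per-part x and y sortings
  have hsortx : ∀ p : Fin 3, ∃ g : Fin 3 → Fin 3, Function.Bijective g ∧
      ∀ i j, i < j → (f ⟨p, g i⟩).x2 ≤ (f ⟨p, g j⟩).x1 := by
    intro p
    apply sort3 (r := fun i j => (f ⟨p, i⟩).x2 ≤ (f ⟨p, j⟩).x1)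
    · intro i j hij
      have hnv : ¬ seesV (f ⟨p, i⟩) (f ⟨p, j⟩) := fun h => hnosee p i j hij (Or.inl h)
      exact not_ioo (f ⟨p, i⟩).hx (f ⟨p, j⟩).hx hnv
    · intro i j h1 h2
      have := (f ⟨p, i⟩).hx; have := (f ⟨p, j⟩).hx; linarith
    · intro i j k h1 h2
      have := (f ⟨p, j⟩).hx; linarith
  have hsorty : ∀ p : Fin 3, ∃ g : Fin 3 → Fin 3, Function.Bijective g ∧
      ∀ i j, i < j → (f ⟨p, g i⟩).y2 ≤ (f ⟨p, g j⟩).y1 := by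
    intro p
    apply sort3 (r := fun i j => (f ⟨p, i⟩).y2 ≤ (f ⟨p, j⟩).y1)
    · intro i j hij
      have hnv : ¬ seesH (f ⟨p, i⟩) (f ⟨p, j⟩) := fun h => hnosee p i j hij (Or.inr h)
      exact not_ioo (f ⟨p, i⟩).hy (f ⟨p, j⟩).hy hnv
    · intro i j h1 h2
      have := (f ⟨p, i⟩).hy; have := (f ⟨p, j⟩).hy; linarith
    · intro i j k h1 h2
      have := (f ⟨p, j⟩).hy; linarith
  choose gx hgxb hgxs using hsortx
  choose gy hgyb hgys using hsorty
  -- relative permutations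
  set π : Fin 3 → Fin 3 → Fin 3 :=
    fun p i => (Equiv.ofBijective (gy p) (hgyb p)).symm (gx p i) with hπ
  have hπτ : ∀ p i, gy p (π p i) = gx p i := by
    intro p i
    exact Equiv.ofBijective_apply_symm_apply (gy p) (hgyb p) (gx p i)
  have hπinj : ∀ p, Function.Injective (π p) := by
    intro p
    exact (Equiv.ofBijective (gy p) (hgyb p)).symm.injective.comp (hgxb p).injective
  -- overlap tables
  set S : Fin 3 → Fin 3 → Fin 3 → Fin 3 → Bool :=
    fun p q i j => decide (seesV (f ⟨p, gx p i⟩) (f ⟨q, gx q j⟩)) with hS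
  have hchain1 : ∀ p q : Fin 3, p ≠ q → chain1 (S p q) := by
    intro p q _ i i' j j' hii hjj ⟨hs1, hs2⟩
    have h1 : seesV (f ⟨p, gx p i⟩) (f ⟨q, gx q j⟩) := of_decide_eq_true hs1
    have h2 : seesV (f ⟨p, gx p i'⟩) (f ⟨q, gx q j'⟩) := of_decide_eq_true hs2
    exact ioo_stair h1 h2 (hgxs p i i' hii) (hgxs q j' j hjj)
  have hchain2 : ∀ p q : Fin 3, p ≠ q → chain2 (π p) (π q) (S p q) := by
    intro p q hpq i i' j j' hii hjj ⟨hs1, hs2⟩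
    have h1x : ¬ seesV (f ⟨p, gx p i⟩) (f ⟨q, gx q j⟩) := of_decide_eq_false hs1
    have h2x : ¬ seesV (f ⟨p, gx p i'⟩) (f ⟨q, gx q j'⟩) := of_decide_eq_false hs2
    have h1 : seesH (f ⟨p, gx p i⟩) (f ⟨q, gx q j⟩) :=
      (hcross p q _ _ hpq).resolve_left h1x
    have h2 : seesH (f ⟨p, gx p i'⟩) (f ⟨q, gx q j'⟩) :=
      (hcross p q _ _ hpq).resolve_left h2x
    have hyp : (f ⟨p, gx p i⟩).y2 ≤ (f ⟨p, gx p i'⟩).y1 := by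
      have := hgys p (π p i) (π p i') hii
      rwa [hπτ, hπτ] at this
    have hyq : (f ⟨q, gx q j'⟩).y2 ≤ (f ⟨q, gx q j⟩).y1 := by
      have := hgys q (π q j') (π q j) hjj
      rwa [hπτ, hπτ] at this
    exact ioo_stair h1 h2 hyp hyq
  exact TRI (π 0) (π 1) (π 2)
    ⟨L1 _ _ (hπinj 0) (hπinj 1) _ (hchain1 0 1 (by decide)) (hchain2 0 1 (by decide)),
     L1 _ _ (hπinj 0) (hπinj 2) _ (hchain1 0 2 (by decide)) (hchain2 0 2 (by decide)),
     L1 _ _ (hπinj 1) (hπinj 2) _ (hchain1 1 2 (by decide)) (hchain2 1 2 (by decide))⟩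
end

section
/- If the graph H is a TRVG, then the join of H with an independent set of two vertices (i.e., the graph obtained from H by adding two new mutually non-adjacent vertices each adjacent to all vertices of H) is also a TRVG. -/
/-- The join of a graph H with two new mutually non-adjacent universal vertices. -/
def joinTwo {V : Type*} (H : SimpleGraph V) : SimpleGraph (V ⊕ Fin 2) where
  Adj u v :=
    match u, v with
    | Sum.inl a, Sum.inl b => H.Adj a b
    | Sum.inl _, Sum.inr _ => True
    | Sum.inr _, Sum.inl _ => True
    | Sum.inr _, Sum.inr _ => False
  symm := by
    constructor
    rintro (a | a) (b | b) h
    · exact h.symm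
    · trivial
    · trivial
    · exact h
  loopless := by
    constructor
    rintro (a | a) h
    · exact H.irrefl h
    · exact h


/-! An infinite representation has no bounding box, so first squash it into the open square
`(-1, 1)²` by applying a strictly increasing bijection `ℝ → (-1, 1)` to both coordinates: such a
map preserves both the separation of closed rectangles and the overlap of open projections. The
rectangles `[1, 2] × [-1, 1]` and `[-1, 1] × [2, 3]` then see every squashed rectangle, through
its y- resp. x-projection, are disjoint from the square, and do not see each other. -/

open Set

namespace Rect

theorem seesV_iff (R S : Rect) : seesV R S ↔ max R.x1 S.x1 < min R.x2 S.x2 := by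
  rw [seesV, Ioo_inter_Ioo, nonempty_Ioo]

theorem seesH_iff (R S : Rect) : seesH R S ↔ max R.y1 S.y1 < min R.y2 S.y2 := by
  rw [seesH, Ioo_inter_Ioo, nonempty_Ioo]

theorem sees_comm (R S : Rect) : sees R S ↔ sees S R := by
  rw [sees, sees, seesV, seesV, seesH, seesH, inter_comm, inter_comm (Ioo R.y1 R.y2)]

theorem disjoint_pts_iff (R S : Rect) :
    Disjoint R.pts S.pts ↔ min R.x2 S.x2 < max R.x1 S.x1 ∨ min R.y2 S.y2 < max R.y1 S.y1 := by
  simp_rw [pts, disjoint_prod, disjoint_iff_inter_eq_empty, Icc_inter_Icc, Icc_eq_empty_iff, not_le]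

def map (φ : ℝ → ℝ) (hφ : StrictMono φ) (R : Rect) : Rect :=
  ⟨φ R.x1, φ R.x2, φ R.y1, φ R.y2, hφ R.hx, hφ R.hy⟩

section Map

variable {φ : ℝ → ℝ} (hφ : StrictMono φ) (R S : Rect)

theorem seesV_map : seesV (R.map φ hφ) (S.map φ hφ) ↔ seesV R S := by
  simp only [seesV_iff, map, ← hφ.monotone.map_max, ← hφ.monotone.map_min, hφ.lt_iff_lt]

theorem seesH_map : seesH (R.map φ hφ) (S.map φ hφ) ↔ seesH R S := by
  simp only [seesH_iff, map, ← hφ.monotone.map_max, ← hφ.monotone.map_min, hφ.lt_iff_lt]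

theorem sees_map : sees (R.map φ hφ) (S.map φ hφ) ↔ sees R S := by
  rw [sees, sees, seesV_map, seesH_map]

theorem disjoint_pts_map : Disjoint (R.map φ hφ).pts (S.map φ hφ).pts ↔ Disjoint R.pts S.pts := by
  simp only [disjoint_pts_iff, map, ← hφ.monotone.map_max, ← hφ.monotone.map_min, hφ.lt_iff_lt]

end Map

def InUnitSquare (R : Rect) : Prop := -1 < R.x1 ∧ R.x2 < 1 ∧ -1 < R.y1 ∧ R.y2 < 1

def rightOfUnitSquare : Rect := ⟨1, 2, -1, 1, one_lt_two, by norm_num⟩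

def aboveUnitSquare : Rect := ⟨-1, 1, 2, 3, by norm_num, by norm_num⟩

theorem disjoint_rightOfUnitSquare {R : Rect} (hR : R.InUnitSquare) :
    Disjoint R.pts rightOfUnitSquare.pts :=
  (disjoint_pts_iff _ _).2 <| Or.inl <|
    (min_le_left _ _).trans_lt (hR.2.1.trans_le (le_max_right _ _))

theorem disjoint_aboveUnitSquare {R : Rect} (hR : R.InUnitSquare) :
    Disjoint R.pts aboveUnitSquare.pts :=
  (disjoint_pts_iff _ _).2 <| Or.inr <|
    (min_le_left _ _).trans_lt (hR.2.2.2.trans (one_lt_two.trans_le (le_max_right _ _)))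

theorem sees_rightOfUnitSquare {R : Rect} (hR : R.InUnitSquare) : sees R rightOfUnitSquare := by
  obtain ⟨-, -, hy1, hy2⟩ := hR
  refine Or.inr ((seesH_iff _ _).2 ?_)
  simp only [rightOfUnitSquare, max_lt_iff, lt_min_iff]
  exact ⟨⟨R.hy, hy1.trans R.hy⟩, hy2.trans' R.hy, by norm_num⟩

theorem sees_aboveUnitSquare {R : Rect} (hR : R.InUnitSquare) : sees R aboveUnitSquare := by
  obtain ⟨hx1, hx2, -, -⟩ := hR
  refine Or.inl ((seesV_iff _ _).2 ?_)
  simp only [aboveUnitSquare, max_lt_iff, lt_min_iff]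
  exact ⟨⟨R.hx, hx1.trans R.hx⟩, hx2.trans' R.hx, by norm_num⟩

theorem disjoint_rightOfUnitSquare_aboveUnitSquare :
    Disjoint rightOfUnitSquare.pts aboveUnitSquare.pts := by
  rw [disjoint_pts_iff]
  norm_num [rightOfUnitSquare, aboveUnitSquare]

theorem not_sees_rightOfUnitSquare_aboveUnitSquare :
    ¬ sees rightOfUnitSquare aboveUnitSquare := by
  rw [sees, seesV_iff, seesH_iff]
  norm_num [rightOfUnitSquare, aboveUnitSquare]

end Rect

theorem IsTRVG.exists_rep_inUnitSquare {V : Type*} {G : SimpleGraph V} (h : IsTRVG G) :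
    ∃ f : V → Rect, (∀ u v, u ≠ v → Disjoint (f u).pts (f v).pts) ∧
      (∀ u v, u ≠ v → (G.Adj u v ↔ sees (f u) (f v))) ∧ ∀ v, (f v).InUnitSquare := by
  obtain ⟨f, hdisj, hadj⟩ := h
  set φ : ℝ → ℝ := fun x => orderIsoIooNegOneOne ℝ x
  have hφ : StrictMono φ := (Subtype.strictMono_coe _).comp (orderIsoIooNegOneOne ℝ).strictMono
  have hφ_mem (x : ℝ) : φ x ∈ Ioo (-1) 1 := (orderIsoIooNegOneOne ℝ x).2
  refine ⟨fun v => (f v).map φ hφ, fun u v huv => ?_, fun u v huv => ?_, fun v => ?_⟩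
  · exact (Rect.disjoint_pts_map hφ _ _).2 (hdisj u v huv)
  · exact (hadj u v huv).trans (Rect.sees_map hφ _ _).symm
  · exact ⟨(hφ_mem _).1, (hφ_mem _).2, (hφ_mem _).1, (hφ_mem _).2⟩

theorem isTRVG_joinTwo_of_rep {V : Type*} {H : SimpleGraph V} {f : V → Rect}
    (hdisj : ∀ u v, u ≠ v → Disjoint (f u).pts (f v).pts)
    (hadj : ∀ u v, u ≠ v → (H.Adj u v ↔ sees (f u) (f v)))
    {A B : Rect} (hAB_disj : Disjoint A.pts B.pts) (hAB_sees : ¬ sees A B)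
    (hA : ∀ v, Disjoint (f v).pts A.pts ∧ sees (f v) A)
    (hB : ∀ v, Disjoint (f v).pts B.pts ∧ sees (f v) B) : IsTRVG (joinTwo H) := by
  have hAB (v : V) (i : Fin 2) :
      Disjoint (f v).pts (![A, B] i).pts ∧ sees (f v) (![A, B] i) := by
    fin_cases i
    exacts [hA v, hB v]
  refine ⟨Sum.elim f ![A, B], ?_, ?_⟩
  · rintro (a | i) (b | j) hne
    · exact hdisj a b (ne_of_apply_ne _ hne)
    · exact (hAB a j).1
    · exact (hAB b i).1.symm
    · fin_cases i <;> fin_cases j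
      exacts [absurd rfl hne, hAB_disj, hAB_disj.symm, absurd rfl hne]
  · rintro (a | i) (b | j) hne
    · exact hadj a b (ne_of_apply_ne _ hne)
    · exact iff_of_true trivial (hAB a j).2
    · exact iff_of_true trivial ((Rect.sees_comm _ _).1 (hAB b i).2)
    · fin_cases i <;> fin_cases j
      exacts [absurd rfl hne, iff_of_false id hAB_sees,
        iff_of_false id (hAB_sees ∘ (Rect.sees_comm _ _).1), absurd rfl hne]

/-- If H is a TRVG, then the join of H with an independent set of two vertices is a TRVG. -/
theorem stmt9 {V : Type*} (H : SimpleGraph V) (h : IsTRVG H) : IsTRVG (joinTwo H) := by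
  obtain ⟨f, hdisj, hadj, hf⟩ := h.exists_rep_inUnitSquare
  exact isTRVG_joinTwo_of_rep hdisj hadj Rect.disjoint_rightOfUnitSquare_aboveUnitSquare
    Rect.not_sees_rightOfUnitSquare_aboveUnitSquare
    (fun v => ⟨Rect.disjoint_rightOfUnitSquare (hf v), Rect.sees_rightOfUnitSquare (hf v)⟩)
    (fun v => ⟨Rect.disjoint_aboveUnitSquare (hf v), Rect.sees_aboveUnitSquare (hf v)⟩)
end
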